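/- Gauge invariance of the Griffiths–Newing covector: let ϑ be a continuously differentiable coframe on U and f : U → ℂ continuously differentiable; define the transformed coframe ϑ̃ by l̃ := l, m̃ := m + f l, ñ := n + f m̄ + f̄ m + |f|² l, i.e. ϑ̃⁰ := (l̃+ñ)/2, ϑ̃¹ := Re m̃, ϑ̃² := Im m̃, ϑ̃³ := (l̃−ñ)/2 (these are real covector fields and ϑ̃ is a coframe). Then ϑ̃ defines the same metric, g̃_{αβ} = g_{αβ}, and the covector field ṽ built from ϑ̃ by the same formula coincides with v: ṽ_α = v_α at every point of U. -/

import Mathlib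

noncomputable section

open scoped Matrix

/-- Points of ℝ⁴. -/
abbrev Pt : Type := Fin 4 → ℝ

/-- Partial derivative ∂_α of a function on ℝ⁴. -/
def pd {E : Type*} [NormedAddCommGroup E] [NormedSpace ℝ E]
    (α : Fin 4) (f : Pt → E) (x : Pt) : E :=
  fderiv ℝ f x (Pi.single α 1)

/-- o_{jk} = o^{jk} = diag(1,-1,-1,-1). -/
def oM : Fin 4 → Fin 4 → ℝ := fun j k => if j = k then (if j = 0 then 1 else -1) else 0

/-- Totally antisymmetric symbol, ε_{0123} = 1. -/
def eps (a b c d : Fin 4) : ℝ :=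
  ∑ σ : Equiv.Perm (Fin 4),
    if σ 0 = a ∧ σ 1 = b ∧ σ 2 = c ∧ σ 3 = d then ((Equiv.Perm.sign σ : ℤ) : ℝ) else 0

/-- Determinant det(ϑ^j_α) of a coframe. -/
def cofDet (ϑ : Fin 4 → Pt → Fin 4 → ℝ) (x : Pt) : ℝ :=
  Matrix.det (Matrix.of fun j α => ϑ j x α)

/-- l := ϑ⁰ + ϑ³. -/
def lC (ϑ : Fin 4 → Pt → Fin 4 → ℝ) (x : Pt) (α : Fin 4) : ℂ :=
  (ϑ 0 x α : ℂ) + (ϑ 3 x α : ℂ)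

/-- m := ϑ¹ + iϑ². -/
def mC (ϑ : Fin 4 → Pt → Fin 4 → ℝ) (x : Pt) (α : Fin 4) : ℂ :=
  (ϑ 1 x α : ℂ) + Complex.I * (ϑ 2 x α : ℂ)

/-- n := ϑ⁰ - ϑ³. -/
def nC (ϑ : Fin 4 → Pt → Fin 4 → ℝ) (x : Pt) (α : Fin 4) : ℂ :=
  (ϑ 0 x α : ℂ) - (ϑ 3 x α : ℂ)

/-- The teleparallel Lagrangian density
λ(l,m,n) := (1/6) ε^{αβγδ} l_α (n_β ∂_γ l_δ − m̄_β ∂_γ m_δ − m_β ∂_γ m̄_δ). -/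
def lam (l m n : Pt → Fin 4 → ℂ) (x : Pt) : ℂ :=
  (1/6 : ℂ) * ∑ α : Fin 4, ∑ β : Fin 4, ∑ γ : Fin 4, ∑ δ : Fin 4,
    (eps α β γ δ : ℂ) * l x α *
      (n x β * pd γ (fun y => l y δ) x
        - (starRingEnd ℂ) (m x β) * pd γ (fun y => m y δ) x
        - m x β * pd γ (fun y => (starRingEnd ℂ) (m y δ)) x)

/-- (du)_{αβ} := ∂_α u_β − ∂_β u_α. -/
def dcov (u : Pt → Fin 4 → ℝ) (α β : Fin 4) (x : Pt) : ℝ :=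
  pd α (fun y => u y β) x - pd β (fun y => u y α) x

/-- Axial torsion T^ax(ϑ)_{αβγ}. -/
def Tax (ϑ : Fin 4 → Pt → Fin 4 → ℝ) (α β γ : Fin 4) (x : Pt) : ℝ :=
  (1/3 : ℝ) * ∑ j : Fin 4, ∑ k : Fin 4, oM j k *
    (ϑ j x α * dcov (ϑ k) β γ x + ϑ j x β * dcov (ϑ k) γ α x + ϑ j x γ * dcov (ϑ k) α β x)

/-- Metric g_{αβ} := o_{jk} ϑ^j_α ϑ^k_β. -/
def gmat (ϑ : Fin 4 → Pt → Fin 4 → ℝ) (x : Pt) : Matrix (Fin 4) (Fin 4) ℝ :=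
  Matrix.of fun α β => ∑ j : Fin 4, ∑ k : Fin 4, oM j k * ϑ j x α * ϑ k x β

/-- Inverse metric g^{αβ}. -/
def ginv (ϑ : Fin 4 → Pt → Fin 4 → ℝ) (x : Pt) : Matrix (Fin 4) (Fin 4) ℝ :=
  (gmat ϑ x)⁻¹

/-- Christoffel symbols Γ^β_{αγ}. -/
def Chr (ϑ : Fin 4 → Pt → Fin 4 → ℝ) (β α γ : Fin 4) (x : Pt) : ℝ :=
  (1/2 : ℝ) * ∑ δ : Fin 4, ginv ϑ x β δ *
    (pd α (fun y => gmat ϑ y γ δ) x + pd γ (fun y => gmat ϑ y α δ) x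
      - pd δ (fun y => gmat ϑ y α γ) x)

/-- Levi-Civita covariant derivative ∇_α u_β of a complex covector field. -/
def covC (ϑ : Fin 4 → Pt → Fin 4 → ℝ) (u : Pt → Fin 4 → ℂ) (α β : Fin 4) (x : Pt) : ℂ :=
  pd α (fun y => u y β) x - ∑ γ : Fin 4, (Chr ϑ γ α β x : ℂ) * u x γ

/-- Levi-Civita covariant derivative ∇_γ F_{αβ} of a complex 2-form. -/
def covF (ϑ : Fin 4 → Pt → Fin 4 → ℝ) (F : Pt → Fin 4 → Fin 4 → ℂ) (γ α β : Fin 4) (x : Pt) : ℂ :=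
  pd γ (fun y => F y α β) x - ∑ δ : Fin 4, (Chr ϑ δ γ α x : ℂ) * F x δ β
    - ∑ δ : Fin 4, (Chr ϑ δ γ β x : ℂ) * F x α δ

/-- The 2-form (l∧m)_{αβ}. -/
def lmForm (ϑ : Fin 4 → Pt → Fin 4 → ℝ) (x : Pt) (α β : Fin 4) : ℂ :=
  lC ϑ x α * mC ϑ x β - lC ϑ x β * mC ϑ x α

/-- The Griffiths–Newing covector v_α := ∇^β (l∧m)_{αβ} − m^β ∇_α l_β. -/
def vGN (ϑ : Fin 4 → Pt → Fin 4 → ℝ) (α : Fin 4) (x : Pt) : ℂ :=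
  (∑ β : Fin 4, ∑ γ : Fin 4, (ginv ϑ x β γ : ℂ) * covF ϑ (fun y a b => lmForm ϑ y a b) γ α β x)
  - ∑ β : Fin 4, ∑ γ : Fin 4, (ginv ϑ x β γ : ℂ) * mC ϑ x γ * covC ϑ (fun y b => lC ϑ y b) α β x

/-- l^α := g^{αβ} l_β. -/
def lup (ϑ : Fin 4 → Pt → Fin 4 → ℝ) (x : Pt) (α : Fin 4) : ℂ :=
  ∑ β : Fin 4, (ginv ϑ x α β : ℂ) * lC ϑ x β

/-- Divergence ∇_α l^α := ∂_α l^α + Γ^α_{αγ} l^γ. -/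
def divl (ϑ : Fin 4 → Pt → Fin 4 → ℝ) (x : Pt) : ℂ :=
  ∑ α : Fin 4, (pd α (fun y => lup ϑ y α) x
    + ∑ γ : Fin 4, (Chr ϑ α α γ x : ℂ) * lup ϑ x γ)

/-- Components of the 4-form L_tele(ϑ) = l ∧ T^ax. -/
def LteleForm (ϑ : Fin 4 → Pt → Fin 4 → ℝ) (α β γ δ : Fin 4) (x : Pt) : ℂ :=
  lC ϑ x α * (Tax ϑ β γ δ x : ℂ) - lC ϑ x β * (Tax ϑ α γ δ x : ℂ)
    + lC ϑ x γ * (Tax ϑ α β δ x : ℂ) - lC ϑ x δ * (Tax ϑ α β γ x : ℂ)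

/-- Hodge star of a complex 4-form: ★F := (1/24) √|det g| F^{αβγδ} ε_{αβγδ}. -/
def star4C (ϑ : Fin 4 → Pt → Fin 4 → ℝ) (F : Fin 4 → Fin 4 → Fin 4 → Fin 4 → ℂ) (x : Pt) : ℂ :=
  (1/24 : ℂ) * (cofDet ϑ x : ℂ) *
    ∑ α : Fin 4, ∑ β : Fin 4, ∑ γ : Fin 4, ∑ δ : Fin 4,
      ∑ α' : Fin 4, ∑ β' : Fin 4, ∑ γ' : Fin 4, ∑ δ' : Fin 4,
        (ginv ϑ x α α' : ℂ) * (ginv ϑ x β β' : ℂ) * (ginv ϑ x γ γ' : ℂ) * (ginv ϑ x δ δ' : ℂ) *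
          F α' β' γ' δ' * (eps α β γ δ : ℂ)

/-- Hodge star of a real 4-form. -/
def star4 (ϑ : Fin 4 → Pt → Fin 4 → ℝ) (F : Fin 4 → Fin 4 → Fin 4 → Fin 4 → ℝ) (x : Pt) : ℝ :=
  (1/24 : ℝ) * cofDet ϑ x *
    ∑ α : Fin 4, ∑ β : Fin 4, ∑ γ : Fin 4, ∑ δ : Fin 4,
      ∑ α' : Fin 4, ∑ β' : Fin 4, ∑ γ' : Fin 4, ∑ δ' : Fin 4,
        ginv ϑ x α α' * ginv ϑ x β β' * ginv ϑ x γ γ' * ginv ϑ x δ δ' *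
          F α' β' γ' δ' * eps α β γ δ

/-- ★L_tele(ϑ). -/
def starLtele (ϑ : Fin 4 → Pt → Fin 4 → ℝ) (x : Pt) : ℂ :=
  star4C ϑ (fun α β γ δ => LteleForm ϑ α β γ δ x) x


/-- Pauli matrices s₀, s₁, s₂, s₃. -/
def sP : Fin 4 → Matrix (Fin 2) (Fin 2) ℂ :=
  ![!![1, 0; 0, 1], !![0, 1; 1, 0], !![0, Complex.I; -Complex.I, 0], !![1, 0; 0, -1]]

/-- The matrix E. -/
def EM : Matrix (Fin 2) (Fin 2) ℂ := !![0, 1; -1, 0]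

/-- Pauli matrices of the coframe: σ_α := ϑ^j_α s_j. -/
def sigLow (ϑ : Fin 4 → Pt → Fin 4 → ℝ) (x : Pt) (α : Fin 4) : Matrix (Fin 2) (Fin 2) ℂ :=
  ∑ j : Fin 4, (ϑ j x α : ℂ) • sP j

/-- σ^α := g^{αβ} σ_β. -/
def sigUp (ϑ : Fin 4 → Pt → Fin 4 → ℝ) (x : Pt) (α : Fin 4) : Matrix (Fin 2) (Fin 2) ℂ :=
  ∑ β : Fin 4, (ginv ϑ x α β : ℂ) • sigLow ϑ x β

/-- σ̂_β := E σ_β Eᵀ. -/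
def sigHat (ϑ : Fin 4 → Pt → Fin 4 → ℝ) (x : Pt) (β : Fin 4) : Matrix (Fin 2) (Fin 2) ℂ :=
  EM * sigLow ϑ x β * EMᵀ

/-- Covariant derivative of a spinor field:
∇_α ξ^a := ∂_α ξ^a + (1/4) (σ̂_β)^{aċ} (∂_α (σ^β)_{bċ} + Γ^β_{αγ} (σ^γ)_{bċ}) ξ^b. -/
def covSpin (ϑ : Fin 4 → Pt → Fin 4 → ℝ) (ξ : Pt → Fin 2 → ℂ) (α : Fin 4) (a : Fin 2)
    (x : Pt) : ℂ :=
  pd α (fun y => ξ y a) x + (1/4 : ℂ) * ∑ β : Fin 4, ∑ b : Fin 2, ∑ c : Fin 2,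
    sigHat ϑ x β a c *
      (pd α (fun y => sigUp ϑ y β b c) x
        + ∑ γ : Fin 4, (Chr ϑ β α γ x : ℂ) * sigUp ϑ x γ b c) * ξ x b

/-- The Weyl Lagrangian density
L_W(ξ) := (i/2)(ξ̄^ḃ (σ^α)_{aḃ} ∇_α ξ^a − ξ^a (σ^α)_{aḃ} ∇_α ξ̄^ḃ) · det(ϑ^j_α). -/
def LW (ϑ : Fin 4 → Pt → Fin 4 → ℝ) (ξ : Pt → Fin 2 → ℂ) (x : Pt) : ℂ :=
  (Complex.I / 2) *
    (∑ α : Fin 4, ∑ a : Fin 2, ∑ b : Fin 2,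
      ((starRingEnd ℂ) (ξ x b) * sigUp ϑ x α a b * covSpin ϑ ξ α a x
        - ξ x a * sigUp ϑ x α a b * (starRingEnd ℂ) (covSpin ϑ ξ α b x))) *
    (cofDet ϑ x : ℂ)

/-- p_j := (1,0,0,1). -/
def pvec : Fin 4 → ℝ := ![1, 0, 0, 1]

/-- p^j := o^{jk} p_k = (1,0,0,-1). -/
def pup : Fin 4 → ℝ := ![1, 0, 0, -1]

/-- Wedge of two 2-forms (G∧F)_{αβγδ}. -/
def w22 (G F : Fin 4 → Fin 4 → ℝ) (α β γ δ : Fin 4) : ℝ :=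
  G α β * F γ δ - G α γ * F β δ + G α δ * F β γ
    + F α β * G γ δ - F α γ * G β δ + F α δ * G β γ

/-- Triple wedge (a∧b∧c)_{αβγ} of covector fields. -/
def triple (a b c : Pt → Fin 4 → ℝ) (x : Pt) (α β γ : Fin 4) : ℝ :=
  a x α * (b x β * c x γ - b x γ * c x β)
    + a x β * (b x γ * c x α - b x α * c x γ)
    + a x γ * (b x α * c x β - b x β * c x α)

/-- Exterior derivative of a 3-form: (dT)_{αβγδ}. -/
def d3 (T : Pt → Fin 4 → Fin 4 → Fin 4 → ℝ) (α β γ δ : Fin 4) (x : Pt) : ℝ :=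
  pd α (fun y => T y β γ δ) x - pd β (fun y => T y α γ δ) x
    + pd γ (fun y => T y α β δ) x - pd δ (fun y => T y α β γ) x

/-- The 4-form p^i o_{lk} (ϑ^j∧ϑ^l)∧dϑ^k − p^j o_{lk} (ϑ^i∧ϑ^l)∧dϑ^k − 2 p_k d(ϑ^k∧ϑ^i∧ϑ^j). -/
def Gform (ϑ : Fin 4 → Pt → Fin 4 → ℝ) (i j : Fin 4) (α β γ δ : Fin 4) (x : Pt) : ℝ :=
  (∑ l : Fin 4, ∑ k : Fin 4, pup i * oM l k *
    w22 (fun a b => ϑ j x a * ϑ l x b - ϑ j x b * ϑ l x a)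
      (fun a b => dcov (ϑ k) a b x) α β γ δ)
  - (∑ l : Fin 4, ∑ k : Fin 4, pup j * oM l k *
    w22 (fun a b => ϑ i x a * ϑ l x b - ϑ i x b * ϑ l x a)
      (fun a b => dcov (ϑ k) a b x) α β γ δ)
  - 2 * ∑ k : Fin 4, pvec k * d3 (fun y a b c => triple (ϑ k) (ϑ i) (ϑ j) y a b c) α β γ δ x

/-- The field-equation scalars G^{ij}. -/
def GScal (ϑ : Fin 4 → Pt → Fin 4 → ℝ) (i j : Fin 4) (x : Pt) : ℝ :=
  star4 ϑ (fun α β γ δ => Gform ϑ i j α β γ δ x) x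

/-- Hodge star of a covector field: (★u)_{βγδ} := √|det g| u^α ε_{αβγδ}. -/
def starCov (ϑ : Fin 4 → Pt → Fin 4 → ℝ) (u : Pt → Fin 4 → ℝ) (β γ δ : Fin 4) (x : Pt) : ℝ :=
  cofDet ϑ x * ∑ α : Fin 4, (∑ μ : Fin 4, ginv ϑ x α μ * u x μ) * eps α β γ δ

/-- ‖T^ax‖² := g^{αα′} g^{ββ′} g^{γγ′} T^ax_{αβγ} T^ax_{α′β′γ′}. -/
def normTaxSq (ϑ : Fin 4 → Pt → Fin 4 → ℝ) (x : Pt) : ℝ :=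
  ∑ α : Fin 4, ∑ α' : Fin 4, ∑ β : Fin 4, ∑ β' : Fin 4, ∑ γ : Fin 4, ∑ γ' : Fin 4,
    ginv ϑ x α α' * ginv ϑ x β β' * ginv ϑ x γ γ' * Tax ϑ α β γ x * Tax ϑ α' β' γ' x

/-- Density of the quadratic teleparallel Lagrangian L(ϑ,s) := s‖T^ax‖² ∗1. -/
def quadDensity (ϑ : Fin 4 → Pt → Fin 4 → ℝ) (s : Pt → ℝ) (x : Pt) : ℝ :=
  s x * normTaxSq ϑ x * cofDet ϑ x

/-- The coframe transformed by an element of B²(M). -/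
def tildeCoframe (ϑ : Fin 4 → Pt → Fin 4 → ℝ) (f : Pt → ℂ) : Fin 4 → Pt → Fin 4 → ℝ :=
  ![fun x α => (((lC ϑ x α) + (nC ϑ x α + f x * (starRingEnd ℂ) (mC ϑ x α)
      + (starRingEnd ℂ) (f x) * mC ϑ x α + (Complex.normSq (f x) : ℂ) * lC ϑ x α)) / 2).re,
    fun x α => (mC ϑ x α + f x * lC ϑ x α).re,
    fun x α => (mC ϑ x α + f x * lC ϑ x α).im,
    fun x α => (((lC ϑ x α) - (nC ϑ x α + f x * (starRingEnd ℂ) (mC ϑ x α)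
      + (starRingEnd ℂ) (f x) * mC ϑ x α + (Complex.normSq (f x) : ℂ) * lC ϑ x α)) / 2).re]

/-! The null rotation fixes `l` and `o_{jk}`, hence `g`, `Γ` and `l ∧ m̃ = l ∧ m`, so it changes
`v` only by `-f l^β ∇_α l_β`. This term vanishes because the Levi-Civita connection is metric:
for a covector `u = c_j ϑ^j` with constant frame components,
`u^β ∇_α u_β = u^β ∂_α u_β - ½ u^β u^γ ∂_α g_{βγ}`, and `∂_α g = (∂_α ϑ)ᵀ o ϑ + ϑᵀ o ∂_α ϑ`
together with `ϑ^j_β u^β = o^{jk} c_k` make the two terms equal. -/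

section Calculus

variable {x : Pt} {f g : Pt → ℝ}

lemma pd_sub (hf : DifferentiableAt ℝ f x) (hg : DifferentiableAt ℝ g x) (α : Fin 4) :
    pd α (fun y => f y - g y) x = pd α f x - pd α g x := by
  simp only [pd, fderiv_fun_sub hf hg, sub_apply]

lemma pd_mul (hf : DifferentiableAt ℝ f x) (hg : DifferentiableAt ℝ g x) (α : Fin 4) :
    pd α (fun y => f y * g y) x = pd α f x * g x + f x * pd α g x := by
  simp only [pd, fderiv_fun_mul hf hg, add_apply, smul_apply, smul_eq_mul]
  ring

lemma pd_ofReal (hf : DifferentiableAt ℝ f x) (α : Fin 4) :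
    pd α (fun y => (f y : ℂ)) x = pd α f x := by
  have h : HasFDerivAt (fun y => (f y : ℂ)) (Complex.ofRealCLM.comp (fderiv ℝ f x)) x :=
    Complex.ofRealCLM.hasFDerivAt.comp x hf.hasFDerivAt
  simp [pd, h.fderiv]

end Calculus

open Matrix

lemma gmat_apply (ϑ : Fin 4 → Pt → Fin 4 → ℝ) (x : Pt) (α β : Fin 4) :
    gmat ϑ x α β = ϑ 0 x α * ϑ 0 x β - ϑ 1 x α * ϑ 1 x β - ϑ 2 x α * ϑ 2 x β
      - ϑ 3 x α * ϑ 3 x β := by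
  simp [gmat, Fin.sum_univ_four, oM]
  ring

def minkowski : Matrix (Fin 4) (Fin 4) ℝ := Matrix.of oM

lemma minkowski_transpose : minkowskiᵀ = minkowski := by
  ext j k; fin_cases j <;> fin_cases k <;> rfl

lemma minkowski_mul_self : minkowski * minkowski = 1 := by
  ext j k; fin_cases j <;> fin_cases k <;> simp [minkowski, oM, Matrix.mul_apply]

def coframeMatrix (ϑ : Fin 4 → Pt → Fin 4 → ℝ) (x : Pt) : Matrix (Fin 4) (Fin 4) ℝ :=
  Matrix.of fun j α => ϑ j x α

def coframeDeriv (ϑ : Fin 4 → Pt → Fin 4 → ℝ) (α : Fin 4) (x : Pt) : Matrix (Fin 4) (Fin 4) ℝ :=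
  Matrix.of fun j β => pd α (fun y => ϑ j y β) x

lemma gmat_eq_transpose_mul_mul (ϑ : Fin 4 → Pt → Fin 4 → ℝ) (x : Pt) :
    gmat ϑ x = (coframeMatrix ϑ x)ᵀ * minkowski * coframeMatrix ϑ x := by
  ext α β
  simp [gmat_apply, coframeMatrix, minkowski, oM, Matrix.mul_apply, Fin.sum_univ_four]
  ring

lemma ginv_transpose (ϑ : Fin 4 → Pt → Fin 4 → ℝ) (x : Pt) : (ginv ϑ x)ᵀ = ginv ϑ x := by
  rw [ginv, Matrix.transpose_nonsing_inv, gmat_eq_transpose_mul_mul, Matrix.transpose_mul,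
    Matrix.transpose_mul, minkowski_transpose, Matrix.transpose_transpose, Matrix.mul_assoc]

lemma coframeMatrix_mul_ginv_mul_transpose {ϑ : Fin 4 → Pt → Fin 4 → ℝ} {x : Pt}
    (h : cofDet ϑ x ≠ 0) :
    coframeMatrix ϑ x * ginv ϑ x * (coframeMatrix ϑ x)ᵀ = minkowski := by
  have hΘ : IsUnit (coframeMatrix ϑ x).det := h.isUnit
  rw [ginv, gmat_eq_transpose_mul_mul, Matrix.mul_inv_rev, Matrix.mul_inv_rev,
    Matrix.inv_eq_left_inv minkowski_mul_self]
  simp only [Matrix.mul_assoc, Matrix.mul_nonsing_inv_cancel_left _ _ hΘ,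
    Matrix.nonsing_inv_mul _ ((Matrix.det_transpose (coframeMatrix ϑ x)).symm ▸ hΘ),
    Matrix.mul_one]

lemma pd_gmat {ϑ : Fin 4 → Pt → Fin 4 → ℝ} {x : Pt}
    (hd : ∀ j β, DifferentiableAt ℝ (fun y => ϑ j y β) x) (α : Fin 4) :
    Matrix.of (fun β μ => pd α (fun y => gmat ϑ y β μ) x) =
      (coframeDeriv ϑ α x)ᵀ * minkowski * coframeMatrix ϑ x
        + (coframeMatrix ϑ x)ᵀ * minkowski * coframeDeriv ϑ α x := by
  ext β μ
  simp only [gmat_apply, Matrix.of_apply]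
  rw [pd_sub (by fun_prop) (by fun_prop), pd_sub (by fun_prop) (by fun_prop),
    pd_sub (by fun_prop) (by fun_prop), pd_mul (hd 0 β) (hd 0 μ), pd_mul (hd 1 β) (hd 1 μ),
    pd_mul (hd 2 β) (hd 2 μ), pd_mul (hd 3 β) (hd 3 μ)]
  simp [coframeDeriv, coframeMatrix, minkowski, oM, Matrix.mul_apply, Fin.sum_univ_four]
  ring

lemma dotProduct_gramDeriv_mulVec {n R : Type*} [Fintype n] [DecidableEq n] [CommRing R]
    {O Θ : Matrix n n R} (D : Matrix n n R) {c w : n → R} (hO : Oᵀ = O) (hOO : O * O = 1)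
    (hw : Θ *ᵥ w = O *ᵥ c) :
    w ⬝ᵥ ((Dᵀ * O * Θ + Θᵀ * O * D) *ᵥ w) = 2 * (c ⬝ᵥ (D *ᵥ w)) := by
  have hc : O *ᵥ (Θ *ᵥ w) = c := by rw [hw, mulVec_mulVec, hOO, one_mulVec]
  have h₁ : w ⬝ᵥ ((Dᵀ * O * Θ) *ᵥ w) = c ⬝ᵥ (D *ᵥ w) := by
    rw [← mulVec_mulVec, ← mulVec_mulVec, hc, dotProduct_mulVec, vecMul_transpose,
      dotProduct_comm]
  have h₂ : w ⬝ᵥ ((Θᵀ * O * D) *ᵥ w) = c ⬝ᵥ (D *ᵥ w) := by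
    rw [← mulVec_mulVec, ← mulVec_mulVec, dotProduct_mulVec, vecMul_transpose, dotProduct_mulVec,
      ← mulVec_transpose, hO, hc]
  rw [add_mulVec, dotProduct_add, h₁, h₂, two_mul]

lemma sum_ginv_mulVec_mul_chr_mul (ϑ : Fin 4 → Pt → Fin 4 → ℝ) (x : Pt) (α : Fin 4)
    (u : Fin 4 → ℝ) :
    ∑ β, ∑ δ, (ginv ϑ x *ᵥ u) β * Chr ϑ δ α β x * u δ =
      1 / 2 * ((ginv ϑ x *ᵥ u) ⬝ᵥ
        (Matrix.of (fun β μ => pd α (fun y => gmat ϑ y β μ) x) *ᵥ (ginv ϑ x *ᵥ u))) := by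
  set w := ginv ϑ x *ᵥ u
  set E : Fin 4 → Fin 4 → Fin 4 → ℝ := fun γ β μ => pd γ (fun y => gmat ϑ y β μ) x
  have hw : ∀ μ, ∑ δ, ginv ϑ x δ μ * u δ = w μ := fun μ => by
    rw [← ginv_transpose]; rfl
  have hswap : ∑ β, ∑ μ, w β * w μ * E β α μ = ∑ β, ∑ μ, w β * w μ * E μ α β := by
    rw [Finset.sum_comm]; simp only [mul_comm (w _) (w _)]
  calc ∑ β, ∑ δ, w β * Chr ϑ δ α β x * u δ
      = 1 / 2 * ∑ β, ∑ μ, w β * (∑ δ, ginv ϑ x δ μ * u δ) * (E α β μ + E β α μ - E μ α β) := by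
        simp only [Chr, Finset.mul_sum, Finset.sum_mul]
        refine Finset.sum_congr rfl fun β _ => ?_
        rw [Finset.sum_comm]
        exact Finset.sum_congr rfl fun _ _ => Finset.sum_congr rfl fun _ _ => by ring
    _ = 1 / 2 * ∑ β, ∑ μ, w β * w μ * E α β μ := by
        simp only [hw, mul_add, mul_sub, Finset.sum_add_distrib, Finset.sum_sub_distrib, hswap]
        ring
    _ = _ := by
        simp only [dotProduct, mulVec, Matrix.of_apply, Finset.mul_sum, E]
        exact Finset.sum_congr rfl fun _ _ => Finset.sum_congr rfl fun _ _ => by ring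

lemma pd_vecMul_coframeMatrix {ϑ : Fin 4 → Pt → Fin 4 → ℝ} {x : Pt}
    (hd : ∀ j β, DifferentiableAt ℝ (fun y => ϑ j y β) x) (c : Fin 4 → ℝ) (α β : Fin 4) :
    pd α (fun y => (c ᵥ* coframeMatrix ϑ y) β) x = (c ᵥ* coframeDeriv ϑ α x) β := by
  simp only [vecMul, dotProduct, coframeMatrix, coframeDeriv, Matrix.of_apply, pd]
  rw [fderiv_fun_sum fun j _ => (hd j β).const_mul (c j)]
  simp [fderiv_const_mul (hd _ β)]

theorem sum_ginv_mulVec_mul_covDeriv_vecMul_eq_zero {ϑ : Fin 4 → Pt → Fin 4 → ℝ} {x : Pt}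
    (hd : ∀ j β, DifferentiableAt ℝ (fun y => ϑ j y β) x) (hdet : cofDet ϑ x ≠ 0)
    (c : Fin 4 → ℝ) (α : Fin 4) :
    ∑ β, (ginv ϑ x *ᵥ (c ᵥ* coframeMatrix ϑ x)) β *
      (pd α (fun y => (c ᵥ* coframeMatrix ϑ y) β) x
        - ∑ δ, Chr ϑ δ α β x * (c ᵥ* coframeMatrix ϑ x) δ) = 0 := by
  have hchr := sum_ginv_mulVec_mul_chr_mul ϑ x α (c ᵥ* coframeMatrix ϑ x)
  set w := ginv ϑ x *ᵥ (c ᵥ* coframeMatrix ϑ x)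
  have hw : coframeMatrix ϑ x *ᵥ w = minkowski *ᵥ c := by
    rw [← coframeMatrix_mul_ginv_mul_transpose hdet, ← mulVec_mulVec, ← mulVec_mulVec,
      mulVec_transpose]
  rw [pd_gmat hd, dotProduct_gramDeriv_mulVec (coframeDeriv ϑ α x) minkowski_transpose
    minkowski_mul_self hw] at hchr
  have hpd : ∑ β, w β * pd α (fun y => (c ᵥ* coframeMatrix ϑ y) β) x
      = c ⬝ᵥ (coframeDeriv ϑ α x *ᵥ w) := by
    rw [dotProduct_mulVec, dotProduct_comm]
    simp only [pd_vecMul_coframeMatrix hd]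
    rfl
  simp only [mul_sub, Finset.sum_sub_distrib, Finset.mul_sum, ← mul_assoc, hpd]
  rw [hchr]
  ring

lemma lC_eq_ofReal (ϑ : Fin 4 → Pt → Fin 4 → ℝ) (y : Pt) (β : Fin 4) :
    lC ϑ y β = ((pvec ᵥ* coframeMatrix ϑ y) β : ℂ) := by
  simp [lC, pvec, vecMul, dotProduct, Fin.sum_univ_four, coframeMatrix]

theorem sum_ginv_mul_lC_mul_covC_lC {ϑ : Fin 4 → Pt → Fin 4 → ℝ} {x : Pt}
    (hd : ∀ j β, DifferentiableAt ℝ (fun y => ϑ j y β) x) (hdet : cofDet ϑ x ≠ 0) (α : Fin 4) :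
    ∑ β, ∑ γ, (ginv ϑ x β γ : ℂ) * lC ϑ x γ * covC ϑ (fun y b => lC ϑ y b) α β x = 0 := by
  have hl : ∀ β, DifferentiableAt ℝ (fun y => (pvec ᵥ* coframeMatrix ϑ y) β) x := fun β => by
    simp only [vecMul, dotProduct, coframeMatrix, Matrix.of_apply]
    fun_prop
  have key := sum_ginv_mulVec_mul_covDeriv_vecMul_eq_zero hd hdet pvec α
  simp only [covC, lC_eq_ofReal, pd_ofReal (hl _), ← Finset.sum_mul]
  exact_mod_cast key

section Gauge

variable (ϑ : Fin 4 → Pt → Fin 4 → ℝ) (f : Pt → ℂ) (y : Pt) (α : Fin 4)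

lemma tildeCoframe_zero : tildeCoframe ϑ f 0 y α = ϑ 0 y α + ((f y).re * ϑ 1 y α
    + (f y).im * ϑ 2 y α) + ((f y).re ^ 2 + (f y).im ^ 2) / 2 * (ϑ 0 y α + ϑ 3 y α) := by
  simp [tildeCoframe, lC, mC, nC, Complex.normSq_apply]
  ring

lemma tildeCoframe_one : tildeCoframe ϑ f 1 y α = ϑ 1 y α + (f y).re * (ϑ 0 y α + ϑ 3 y α) := by
  simp [tildeCoframe, lC, mC]

lemma tildeCoframe_two : tildeCoframe ϑ f 2 y α = ϑ 2 y α + (f y).im * (ϑ 0 y α + ϑ 3 y α) := by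
  simp [tildeCoframe, lC, mC]

lemma tildeCoframe_three : tildeCoframe ϑ f 3 y α = ϑ 3 y α - ((f y).re * ϑ 1 y α
    + (f y).im * ϑ 2 y α) - ((f y).re ^ 2 + (f y).im ^ 2) / 2 * (ϑ 0 y α + ϑ 3 y α) := by
  simp [tildeCoframe, lC, mC, nC, Complex.normSq_apply]
  ring

lemma gmat_tildeCoframe : gmat (tildeCoframe ϑ f) = gmat ϑ := by
  ext y α β
  simp only [gmat_apply, tildeCoframe_zero, tildeCoframe_one, tildeCoframe_two,
    tildeCoframe_three]
  ring

lemma lC_tildeCoframe : lC (tildeCoframe ϑ f) = lC ϑ := by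
  ext y α
  simp only [lC, tildeCoframe_zero, tildeCoframe_three]
  push_cast
  ring

lemma mC_tildeCoframe : mC (tildeCoframe ϑ f) y α = mC ϑ y α + f y * lC ϑ y α := by
  rw [mC, mul_comm]
  exact Complex.re_add_im _

lemma vGN_tildeCoframe : vGN (tildeCoframe ϑ f) α y = vGN ϑ α y
    - f y * ∑ β, ∑ γ, (ginv ϑ y β γ : ℂ) * lC ϑ y γ * covC ϑ (fun z b => lC ϑ z b) α β y := by
  have hginv : ginv (tildeCoframe ϑ f) = ginv ϑ := by
    ext1 z; rw [ginv, ginv, gmat_tildeCoframe]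
  have hChr : Chr (tildeCoframe ϑ f) = Chr ϑ := by
    ext; simp only [Chr, hginv, gmat_tildeCoframe]
  have hlm : lmForm (tildeCoframe ϑ f) = lmForm ϑ := by
    ext z a b; simp only [lmForm, lC_tildeCoframe, mC_tildeCoframe]; ring
  have hcovF : covF (tildeCoframe ϑ f) = covF ϑ := by
    ext; simp only [covF, hChr]
  have hcovC : covC (tildeCoframe ϑ f) = covC ϑ := by
    ext; simp only [covC, hChr]
  simp only [vGN, hginv, hlm, hcovF, hcovC, lC_tildeCoframe, mC_tildeCoframe, mul_add, add_mul,
    Finset.sum_add_distrib, Finset.mul_sum, sub_add_eq_sub_sub]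
  congr 1
  exact Finset.sum_congr rfl fun _ _ => Finset.sum_congr rfl fun _ _ => by ring

end Gauge

theorem griffiths_newing_gauge_invariance_general
    (U : Set Pt) (hU : IsOpen U) (ϑ : Fin 4 → Pt → Fin 4 → ℝ)
    (hreg : ∀ j, ContDiffOn ℝ 1 (ϑ j) U)
    (hdet : ∀ x ∈ U, 0 < cofDet ϑ x)
    (f : Pt → ℂ) :
    ∀ x ∈ U,
      gmat (tildeCoframe ϑ f) x = gmat ϑ x ∧
      ∀ α : Fin 4, vGN (tildeCoframe ϑ f) α x = vGN ϑ α x := by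
  intro x hx
  have hd : ∀ j β, DifferentiableAt ℝ (fun y => ϑ j y β) x := fun j =>
    differentiableAt_pi.mp (((hreg j).differentiableOn one_ne_zero).differentiableAt
      (hU.mem_nhds hx))
  refine ⟨congrFun (gmat_tildeCoframe ϑ f) x, fun α => ?_⟩
  rw [vGN_tildeCoframe, sum_ginv_mul_lC_mul_covC_lC hd (hdet x hx).ne' α, mul_zero, sub_zero]

/-- Gauge invariance of the Griffiths–Newing covector: the transformed coframe
(l̃ = l, m̃ = m + fl, ñ = n + fm̄ + f̄m + |f|²l) defines the same metric and the same
covector field v. -/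
theorem griffiths_newing_gauge_invariance
    (U : Set Pt) (hU : IsOpen U) (ϑ : Fin 4 → Pt → Fin 4 → ℝ)
    (hreg : ∀ j, ContDiffOn ℝ 1 (ϑ j) U)
    (hdet : ∀ x ∈ U, 0 < cofDet ϑ x)
    (f : Pt → ℂ) (hf : ContDiffOn ℝ 1 f U) :
    ∀ x ∈ U,
      gmat (tildeCoframe ϑ f) x = gmat ϑ x ∧
      ∀ α : Fin 4, vGN (tildeCoframe ϑ f) α x = vGN ϑ α x :=
  griffiths_newing_gauge_invariance_general U hU ϑ hreg hdet f
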